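/- For every positive integer M, the boundary trace at the right endpoint satisfies the two-sided estimate (4M(1−L)t₀/(1−ℓ₂²)²)·E(t₀) ≤ ∫_{t₀}^{(αβ)^M·t₀} t·φₓ(ℓ₂t, t)² dt ≤ (4M(1+L)t₀/(1−ℓ₂²)²)·E(t₀), where L = max{ℓ₁,ℓ₂}. -/

import Mathlib

/-!
Write `G u = iπκ ∑ₙ n cₙ e^{inπu}`, a continuous `2`-periodic profile, and `ρ = (1+ℓ₂)/(1-ℓ₂)`.
Since `Cₙ = cₙ ρ^{inπκ}`, the field splits into an incident and a reflected wave: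
`φₓ, φ_t = G(κ log(t+x))/(t+x) ± G(κ log(t-x) + κ log ρ)/(t-x)`, so by the parallelogram law the
energy density is `2(|G(κ log(t+x))|²/(t+x)² + |G(κ log(t-x) + κ log ρ)|²/(t-x)²)`.
In the variable `u = κ log s` (with `du = κ ds / s`) the two terms of `E(t₀)` sweep adjacent
`u`-intervals which together make up exactly one period, because `κ log(αβ) = 2`; as
`(1-L)t₀ ≤ s ≤ (1+L)t₀`, this pinches `E(t₀)` between `P / ((1±L)t₀κ)` with `P = ∫₀² |G|²`.
On the boundary `x = ℓ₂t` both waves arrive with the same phase, so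
`t φₓ(ℓ₂t, t)² = 4 |G(κ log((1+ℓ₂)t))|² / ((1-ℓ₂²)² t)`, and along `t₀ ≤ t ≤ (αβ)ᴹ t₀` the phase
runs through exactly `M` periods: the boundary integral is `4MP / ((1-ℓ₂²)²κ)`.
-/

open MeasureTheory Set
open Complex (I)
open scoped Real

noncomputable def trigSeries (d : ℤ → ℂ) (u : ℝ) : ℂ :=
  ∑' n : ℤ, d n * Complex.exp (I * n * π * u)

section TrigSeries

variable {d : ℤ → ℂ}

lemma norm_mul_exp_I_mul_pi (d : ℤ → ℂ) (n : ℤ) (u : ℝ) :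
    ‖d n * Complex.exp (I * n * π * u)‖ = ‖d n‖ := by
  rw [norm_mul, show I * n * π * u = I * ((n * π * u : ℝ) : ℂ) by push_cast; ring,
    Complex.norm_exp_I_mul_ofReal, mul_one]

lemma summable_trigSeries (hd : Summable fun n => ‖d n‖) (u : ℝ) :
    Summable fun n : ℤ => d n * Complex.exp (I * n * π * u) :=
  .of_norm (by simpa only [norm_mul_exp_I_mul_pi] using hd)

lemma continuous_trigSeries (hd : Summable fun n => ‖d n‖) : Continuous (trigSeries d) :=
  continuous_tsum (fun n => by fun_prop) hd fun n u => (norm_mul_exp_I_mul_pi d n u).le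

lemma periodic_trigSeries (d : ℤ → ℂ) : Function.Periodic (trigSeries d) 2 := fun u => by
  refine tsum_congr fun n => ?_
  rw [show I * n * π * ((u + 2 : ℝ) : ℂ) = I * n * π * u + n * (2 * π * I) by push_cast; ring,
    Complex.exp_add, Complex.exp_int_mul_two_pi_mul_I, mul_one]

end TrigSeries

lemma integral_comp_mul_log (f : ℝ → ℝ) (hf : Continuous f) (κ : ℝ) {a b : ℝ}
    (ha : 0 < a) (hb : 0 < b) :
    ∫ s in a..b, κ / s * f (κ * Real.log s) = ∫ u in κ * Real.log a..κ * Real.log b, f u := by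
  have hpos : ∀ s ∈ uIcc a b, 0 < s := fun s hs => (lt_min ha hb).trans_le hs.1
  have hderiv : ∀ s ∈ uIcc a b, HasDerivAt (fun s => κ * Real.log s) (κ / s) s := fun s hs => by
    simpa [div_eq_mul_inv] using ((Real.hasDerivAt_log (hpos s hs).ne').const_mul κ)
  have hcont : ContinuousOn (fun s => κ / s) (uIcc a b) :=
    continuousOn_const.div continuousOn_id fun s hs => (hpos s hs).ne'
  simpa [mul_comm] using intervalIntegral.integral_comp_mul_deriv hderiv hcont hf

lemma integral_comp_mul_log_add_of_periodic {f : ℝ → ℝ} (hf : Continuous f) {T : ℝ}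
    (hper : Function.Periodic f T) (σ : ℝ) {κ a b : ℝ} (ha : 0 < a) (hb : 0 < b) (M : ℕ)
    (hab : κ * Real.log b = κ * Real.log a + M * T) :
    ∫ s in a..b, κ / s * f (κ * Real.log s + σ) = M * ∫ u in 0..T, f u := by
  have hf' : Continuous fun u => f (u + σ) := by fun_prop
  rw [integral_comp_mul_log _ hf' κ ha hb, hab, show (M : ℝ) * T = (M : ℤ) • T by simp,
    (hper.add_const σ).intervalIntegral_add_zsmul_eq M _ fun _ _ => hf'.intervalIntegrable _ _,
    (hper.add_const σ).intervalIntegral_add_eq _ 0, zero_add, zsmul_eq_mul, Int.cast_natCast,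
    intervalIntegral.integral_comp_add_right, zero_add, add_comm T,
    hper.intervalIntegral_add_eq σ 0, zero_add]

lemma continuousOn_comp_mul_log_div_sq {f : ℝ → ℝ} (hf : Continuous f) (κ : ℝ) :
    ContinuousOn (fun s => f (κ * Real.log s) / s ^ 2) (Ioi 0) :=
  (hf.comp_continuousOn (continuousOn_const.mul (Real.continuousOn_log.mono
    fun _ hs => (ne_of_gt hs)))).div (continuousOn_pow 2) fun _ hs => (pow_pos hs 2).ne'

lemma integral_comp_mul_log_div_sq_mem_Icc {f : ℝ → ℝ} (hf : Continuous f)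
    (hf0 : ∀ u, 0 ≤ f u) {κ m M a b : ℝ} (hκ : 0 < κ) (hm : 0 < m) (hma : m ≤ a)
    (hab : a ≤ b) (hbM : b ≤ M) :
    ∫ s in a..b, f (κ * Real.log s) / s ^ 2 ∈
      Icc ((M * κ)⁻¹ * ∫ u in κ * Real.log a..κ * Real.log b, f u)
        ((m * κ)⁻¹ * ∫ u in κ * Real.log a..κ * Real.log b, f u) := by
  have hpos : ∀ s ∈ Icc a b, 0 < s := fun s hs => hm.trans_le (hma.trans hs.1)
  have hcont : ContinuousOn (fun s => f (κ * Real.log s)) (Icc a b) :=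
    hf.comp_continuousOn (continuousOn_const.mul (Real.continuousOn_log.mono
      fun s hs => (hpos s hs).ne'))
  have hint_sq : IntervalIntegrable (fun s => f (κ * Real.log s) / s ^ 2) volume a b :=
    ((continuousOn_comp_mul_log_div_sq hf κ).mono hpos).intervalIntegrable_of_Icc hab
  have hint : IntervalIntegrable (fun s => κ / s * f (κ * Real.log s)) volume a b :=
    ((continuousOn_const.div continuousOn_id fun s hs => (hpos s hs).ne').mul
      hcont).intervalIntegrable_of_Icc hab
  have hsub := integral_comp_mul_log f hf κ (hm.trans_le hma) (hm.trans_le (hma.trans hab))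
  rw [← hsub, ← intervalIntegral.integral_const_mul, ← intervalIntegral.integral_const_mul]
  -- `(c κ)⁻¹ · (κ / s) f = f / (c s)`, and `m s ≤ s ^ 2 ≤ M s` on `[a, b]`
  constructor
  · refine intervalIntegral.integral_mono_on hab (hint.const_mul _) hint_sq fun s hs => ?_
    have hs0 := hpos s hs
    rw [show (M * κ)⁻¹ * (κ / s * f (κ * Real.log s)) = f (κ * Real.log s) / (M * s) by
      field_simp]
    exact div_le_div_of_nonneg_left (hf0 _) (by positivity) (by nlinarith [hs.2])
  · refine intervalIntegral.integral_mono_on hab hint_sq (hint.const_mul _) fun s hs => ?_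
    have hs0 := hpos s hs
    rw [show (m * κ)⁻¹ * (κ / s * f (κ * Real.log s)) = f (κ * Real.log s) / (m * s) by
      field_simp]
    exact div_le_div_of_nonneg_left (hf0 _) (by positivity) (by nlinarith [hs.1])

lemma integral_comp_add_add_comp_sub {F G : ℝ → ℝ} (hF : ContinuousOn F (Ioi 0))
    (hG : ContinuousOn G (Ioi 0)) {t a b : ℝ} (hab : a ≤ b) (ha : 0 < t + a) (hb : 0 < t - b) :
    ∫ x in a..b, (F (t + x) + G (t - x)) =
      (∫ s in t + a..t + b, F s) + ∫ s in t - b..t - a, G s := by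
  have hF' : IntervalIntegrable (fun x => F (t + x)) volume a b :=
    (hF.comp (f := fun x => t + x) (by fun_prop) fun x hx =>
      show 0 < t + x by linarith [hx.1]).intervalIntegrable_of_Icc hab
  have hG' : IntervalIntegrable (fun x => G (t - x)) volume a b :=
    (hG.comp (f := fun x => t - x) (by fun_prop) fun x hx =>
      show 0 < t - x by linarith [hx.2]).intervalIntegrable_of_Icc hab
  rw [intervalIntegral.integral_add hF' hG', intervalIntegral.integral_comp_add_left,
    intervalIntegral.integral_comp_sub_left]

lemma sq_add_sq_eq_of_ofReal_eq {X Y : ℝ} {A B : ℂ} (hX : (X : ℂ) = A + B)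
    (hY : (Y : ℂ) = A - B) : X ^ 2 + Y ^ 2 = 2 * (‖A‖ ^ 2 + ‖B‖ ^ 2) := by
  rw [← parallelogram_law_with_norm ℝ, ← hX, ← hY, Complex.norm_real, Complex.norm_real,
    Real.norm_eq_abs, Real.norm_eq_abs, sq_abs, sq_abs]

noncomputable def waveProfile (κ : ℝ) (c : ℤ → ℂ) : ℝ → ℂ :=
  trigSeries fun n => I * π * κ * n * c n

section Wave

variable {κ : ℝ} {c : ℤ → ℂ}

lemma summable_norm_wave_coeff (hc : Summable fun n : ℤ => ‖(n : ℂ) * c n‖) :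
    Summable fun n : ℤ => ‖I * π * κ * n * c n‖ := by
  simpa only [← norm_mul, mul_assoc] using hc.mul_left ‖I * π * κ‖

lemma continuous_waveProfile (hc : Summable fun n : ℤ => ‖(n : ℂ) * c n‖) :
    Continuous (waveProfile κ c) :=
  continuous_trigSeries (summable_norm_wave_coeff hc)

lemma periodic_waveProfile (κ : ℝ) (c : ℤ → ℂ) : Function.Periodic (waveProfile κ c) 2 :=
  periodic_trigSeries _

lemma hasSum_wave (hc : Summable fun n : ℤ => ‖(n : ℂ) * c n‖) {b : ℤ → ℂ} {r : ℝ}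
    (hb : ∀ n : ℤ, b n = c n * Complex.exp (I * n * π * κ * Real.log r)) (s : ℝ) :
    HasSum (fun n : ℤ => I * π * κ *
        ((n : ℂ) * (b n * Complex.exp (I * n * π * κ * Real.log s) / (s : ℂ))))
      (waveProfile κ c (κ * Real.log s + κ * Real.log r) / s) := by
  refine ((summable_trigSeries (summable_norm_wave_coeff hc) _).hasSum.div_const (s : ℂ)).congr_fun
    fun n => ?_
  rw [hb]
  push_cast
  rw [mul_add (I * n * π), Complex.exp_add]
  ring_nf

lemma wave_tsum_add_sub (hc : Summable fun n : ℤ => ‖(n : ℂ) * c n‖) {C : ℤ → ℂ} {ρ : ℝ}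
    (hC : ∀ n : ℤ, C n = c n * Complex.exp (I * n * π * κ * Real.log ρ)) (a b : ℝ) :
    I * π * κ * ∑' n : ℤ, (n : ℂ) *
        (c n * Complex.exp (I * n * π * κ * Real.log a) / (a : ℂ) +
          C n * Complex.exp (I * n * π * κ * Real.log b) / (b : ℂ)) =
      waveProfile κ c (κ * Real.log a) / a +
        waveProfile κ c (κ * Real.log b + κ * Real.log ρ) / b ∧
    I * π * κ * ∑' n : ℤ, (n : ℂ) *
        (c n * Complex.exp (I * n * π * κ * Real.log a) / (a : ℂ) -
          C n * Complex.exp (I * n * π * κ * Real.log b) / (b : ℂ)) =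
      waveProfile κ c (κ * Real.log a) / a -
        waveProfile κ c (κ * Real.log b + κ * Real.log ρ) / b := by
  have hA := hasSum_wave (κ := κ) hc (b := c) (r := 1) (fun n => by simp) a
  have hB := hasSum_wave hc hC b
  rw [Real.log_one, mul_zero, add_zero] at hA
  rw [← tsum_mul_left, ← tsum_mul_left]
  exact ⟨(hA.add hB).tsum_eq ▸ tsum_congr fun n => by ring,
    (hA.sub hB).tsum_eq ▸ tsum_congr fun n => by ring⟩

end Wave

section Reflection

variable {ℓ₁ ℓ₂ κ t₀ : ℝ} {G : ℝ → ℂ}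

lemma one_lt_div_mul_div (hℓ₁ : ℓ₁ < 1) (hℓ₂ : ℓ₂ < 1) (hℓ : 0 < ℓ₁ + ℓ₂) :
    1 < (1 + ℓ₁) / (1 - ℓ₂) * ((1 + ℓ₂) / (1 - ℓ₁)) := by
  rw [div_mul_div_comm, one_lt_div (by nlinarith)]
  nlinarith

lemma integral_energy_density_mem_Icc (hℓ₁ : ℓ₁ < 1) (hℓ₂ : ℓ₂ < 1) (hℓ : 0 < ℓ₁ + ℓ₂)
    (hκ : 0 < κ) (hperiod : κ * Real.log ((1 + ℓ₁) / (1 - ℓ₂) * ((1 + ℓ₂) / (1 - ℓ₁))) = 2)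
    {q : ℝ → ℝ} (hq : Continuous q) (hq0 : ∀ u, 0 ≤ q u) (hper : Function.Periodic q 2)
    (ht₀ : 0 < t₀) :
    ∫ x in -ℓ₁ * t₀..ℓ₂ * t₀, (q (κ * Real.log (t₀ + x)) / (t₀ + x) ^ 2 +
        q (κ * Real.log (t₀ - x) + κ * Real.log ((1 + ℓ₂) / (1 - ℓ₂))) / (t₀ - x) ^ 2) ∈
      Icc (((1 + max ℓ₁ ℓ₂) * t₀ * κ)⁻¹ * ∫ u in 0..2, q u)
        (((1 - max ℓ₁ ℓ₂) * t₀ * κ)⁻¹ * ∫ u in 0..2, q u) := by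
  set L := max ℓ₁ ℓ₂
  set σ := κ * Real.log ((1 + ℓ₂) / (1 - ℓ₂))
  have h₁L : ℓ₁ ≤ L := le_max_left _ _
  have h₂L : ℓ₂ ≤ L := le_max_right _ _
  have hL : L < 1 := max_lt hℓ₁ hℓ₂
  have hqσ : Continuous fun u => q (u + σ) := by fun_prop
  have hρ : 0 < (1 + ℓ₂) / (1 - ℓ₂) := div_pos (by linarith) (by linarith)
  have hαβ := zero_lt_one.trans (one_lt_div_mul_div hℓ₁ hℓ₂ hℓ)
  rw [integral_comp_add_add_comp_sub (continuousOn_comp_mul_log_div_sq hq κ)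
      (continuousOn_comp_mul_log_div_sq hqσ κ) (by nlinarith) (by nlinarith) (by nlinarith),
    show t₀ + -ℓ₁ * t₀ = (1 - ℓ₁) * t₀ by ring, show t₀ + ℓ₂ * t₀ = (1 + ℓ₂) * t₀ by ring,
    show t₀ - ℓ₂ * t₀ = (1 - ℓ₂) * t₀ by ring, show t₀ - -ℓ₁ * t₀ = (1 + ℓ₁) * t₀ by ring]
  obtain ⟨hlow₁, hupp₁⟩ := integral_comp_mul_log_div_sq_mem_Icc hq hq0 hκ
    (m := (1 - L) * t₀) (M := (1 + L) * t₀) (a := (1 - ℓ₁) * t₀) (b := (1 + ℓ₂) * t₀)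
    (by nlinarith) (by nlinarith) (by nlinarith) (by nlinarith)
  obtain ⟨hlow₂, hupp₂⟩ := integral_comp_mul_log_div_sq_mem_Icc hqσ (fun u => hq0 _) hκ
    (m := (1 - L) * t₀) (M := (1 + L) * t₀) (a := (1 - ℓ₂) * t₀) (b := (1 + ℓ₁) * t₀)
    (by nlinarith) (by nlinarith) (by nlinarith) (by nlinarith)
  -- the two ranges of `κ log` are adjacent and together make up one period of `q`
  have hperiod_split : (∫ u in κ * Real.log ((1 - ℓ₁) * t₀)..κ * Real.log ((1 + ℓ₂) * t₀), q u) +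
      (∫ u in κ * Real.log ((1 - ℓ₂) * t₀)..κ * Real.log ((1 + ℓ₁) * t₀), q (u + σ)) =
      ∫ u in 0..2, q u := by
    have hrefl : κ * Real.log ((1 - ℓ₂) * t₀) + σ = κ * Real.log ((1 + ℓ₂) * t₀) := by
      rw [← mul_add, ← Real.log_mul (by nlinarith) hρ.ne']
      congr 2
      field_simp [(by linarith : (1 - ℓ₂) ≠ 0)]
    have hinc : κ * Real.log ((1 + ℓ₁) * t₀) + σ = κ * Real.log ((1 - ℓ₁) * t₀) + 2 := by
      rw [← hperiod, ← mul_add, ← mul_add, ← Real.log_mul (by nlinarith) hρ.ne',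
        ← Real.log_mul (by nlinarith) hαβ.ne']
      congr 2
      field_simp [(by linarith : (1 - ℓ₂) ≠ 0), (by linarith : (1 - ℓ₁) ≠ 0)]
    rw [intervalIntegral.integral_comp_add_right, hrefl, hinc,
      intervalIntegral.integral_add_adjacent_intervals (hq.intervalIntegrable _ _)
        (hq.intervalIntegrable _ _),
      hper.intervalIntegral_add_eq _ 0, zero_add]
  rw [← hperiod_split, mul_add, mul_add]
  exact ⟨add_le_add hlow₁ hlow₂, add_le_add hupp₁ hupp₂⟩

lemma mul_sq_eq_of_boundary (hℓ₂ : ℓ₂ < 1) (hℓ₂' : -1 < ℓ₂) (hκ : κ ≠ 0) {t X : ℝ} (ht : 0 < t)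
    (hX : (X : ℂ) = G (κ * Real.log (t + ℓ₂ * t)) / ((t + ℓ₂ * t : ℝ) : ℂ) +
      G (κ * Real.log (t - ℓ₂ * t) + κ * Real.log ((1 + ℓ₂) / (1 - ℓ₂))) /
        ((t - ℓ₂ * t : ℝ) : ℂ)) :
    t * X ^ 2 = 4 / ((1 - ℓ₂ ^ 2) ^ 2 * κ) *
      (κ / t * ‖G (κ * Real.log t + κ * Real.log (1 + ℓ₂))‖ ^ 2) := by
  have hinc : κ * Real.log (t + ℓ₂ * t) = κ * Real.log t + κ * Real.log (1 + ℓ₂) := by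
    rw [← mul_add, ← Real.log_mul ht.ne' (by linarith), mul_one_add, mul_comm ℓ₂]
  -- the reflected wave meets the boundary `x = ℓ₂ t` in the same phase as the incident one
  have hrefl : κ * Real.log (t - ℓ₂ * t) + κ * Real.log ((1 + ℓ₂) / (1 - ℓ₂)) =
      κ * Real.log (t + ℓ₂ * t) := by
    rw [← mul_add, ← Real.log_mul (by nlinarith) (div_pos (by linarith) (by linarith)).ne']
    congr 2
    field_simp [(by linarith : (1 - ℓ₂) ≠ 0)]
  rw [hrefl, hinc] at hX
  have hX' : (X : ℂ) = ((2 / ((1 - ℓ₂ ^ 2) * t) : ℝ) : ℂ) *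
      G (κ * Real.log t + κ * Real.log (1 + ℓ₂)) := by
    have hsum : 1 / (t + ℓ₂ * t) + 1 / (t - ℓ₂ * t) = 2 / ((1 - ℓ₂ ^ 2) * t) := by
      have : 1 + ℓ₂ ≠ 0 := by linarith
      have : 1 - ℓ₂ ≠ 0 := by linarith
      rw [show 1 - ℓ₂ ^ 2 = (1 + ℓ₂) * (1 - ℓ₂) by ring]
      field_simp
      ring
    rw [hX, ← hsum]
    push_cast
    ring
  have hnorm := congrArg (‖·‖ ^ 2) hX'
  simp only [norm_mul, Complex.norm_real, Real.norm_eq_abs, mul_pow, sq_abs] at hnorm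
  rw [hnorm]
  field_simp
  ring

lemma half_integral_sq_add_sq_mem_Icc (hℓ₁ : ℓ₁ < 1) (hℓ₂ : ℓ₂ < 1) (hℓ : 0 < ℓ₁ + ℓ₂)
    (hκ : 0 < κ) (hperiod : κ * Real.log ((1 + ℓ₁) / (1 - ℓ₂) * ((1 + ℓ₂) / (1 - ℓ₁))) = 2)
    (hG : Continuous G) (hGper : Function.Periodic G 2) (ht₀ : 0 < t₀) {X Y : ℝ → ℝ}
    (hXY : ∀ x ∈ Icc (-ℓ₁ * t₀) (ℓ₂ * t₀),
      let A := G (κ * Real.log (t₀ + x)) / ((t₀ + x : ℝ) : ℂ)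
      let B := G (κ * Real.log (t₀ - x) + κ * Real.log ((1 + ℓ₂) / (1 - ℓ₂))) /
        ((t₀ - x : ℝ) : ℂ)
      (X x : ℂ) = A + B ∧ (Y x : ℂ) = A - B) :
    1 / 2 * ∫ x in Ioo (-ℓ₁ * t₀) (ℓ₂ * t₀), (X x ^ 2 + Y x ^ 2) ∈
      Icc (((1 + max ℓ₁ ℓ₂) * t₀ * κ)⁻¹ * ∫ u in 0..2, ‖G u‖ ^ 2)
        (((1 - max ℓ₁ ℓ₂) * t₀ * κ)⁻¹ * ∫ u in 0..2, ‖G u‖ ^ 2) := by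
  have hab : -ℓ₁ * t₀ ≤ ℓ₂ * t₀ := by nlinarith
  have hdensity : 1 / 2 * ∫ x in Ioo (-ℓ₁ * t₀) (ℓ₂ * t₀), (X x ^ 2 + Y x ^ 2) =
      ∫ x in -ℓ₁ * t₀..ℓ₂ * t₀, (‖G (κ * Real.log (t₀ + x))‖ ^ 2 / (t₀ + x) ^ 2 +
        ‖G (κ * Real.log (t₀ - x) + κ * Real.log ((1 + ℓ₂) / (1 - ℓ₂)))‖ ^ 2 / (t₀ - x) ^ 2) := by
    rw [← integral_Ioc_eq_integral_Ioo, ← intervalIntegral.integral_of_le hab,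
      ← intervalIntegral.integral_const_mul]
    refine intervalIntegral.integral_congr fun x hx => ?_
    rw [uIcc_of_le hab] at hx
    obtain ⟨hX, hY⟩ := hXY x hx
    simp only [sq_add_sq_eq_of_ofReal_eq hX hY, norm_div, Complex.norm_real, Real.norm_eq_abs,
      div_pow, sq_abs]
    ring
  rw [hdensity]
  exact integral_energy_density_mem_Icc hℓ₁ hℓ₂ hℓ hκ hperiod (q := fun u => ‖G u‖ ^ 2)
    (by fun_prop) (fun u => by positivity) (fun u => by simp only [hGper u]) ht₀

lemma integral_mul_sq_boundary_eq (hℓ₂ : ℓ₂ < 1) (hℓ₂' : -1 < ℓ₂) (hκ : 0 < κ)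
    (hG : Continuous G) (hGper : Function.Periodic G 2) (ht₀ : 0 < t₀) {r : ℝ} (hr : 1 ≤ r)
    (M : ℕ) (hrM : κ * Real.log r = M * 2) {X : ℝ → ℝ}
    (hX : ∀ t, t₀ ≤ t → (X t : ℂ) = G (κ * Real.log (t + ℓ₂ * t)) / ((t + ℓ₂ * t : ℝ) : ℂ) +
      G (κ * Real.log (t - ℓ₂ * t) + κ * Real.log ((1 + ℓ₂) / (1 - ℓ₂))) /
        ((t - ℓ₂ * t : ℝ) : ℂ)) :
    ∫ t in Ioo t₀ (r * t₀), t * X t ^ 2 =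
      4 / ((1 - ℓ₂ ^ 2) ^ 2 * κ) * (M * ∫ u in 0..2, ‖G u‖ ^ 2) := by
  have hT : t₀ ≤ r * t₀ := le_mul_of_one_le_left ht₀.le hr
  have hr0 : 0 < r := zero_lt_one.trans_le hr
  have hlog : κ * Real.log (r * t₀) = κ * Real.log t₀ + M * 2 := by
    rw [Real.log_mul hr0.ne' ht₀.ne', mul_add, hrM, add_comm]
  rw [← integral_Ioc_eq_integral_Ioo, ← intervalIntegral.integral_of_le hT,
    ← integral_comp_mul_log_add_of_periodic (f := fun u => ‖G u‖ ^ 2) (by fun_prop)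
      (fun u => by simp only [hGper u])
      (κ * Real.log (1 + ℓ₂)) ht₀ (mul_pos hr0 ht₀) M hlog,
    ← intervalIntegral.integral_const_mul]
  refine intervalIntegral.integral_congr fun t ht => ?_
  rw [uIcc_of_le hT] at ht
  exact mul_sq_eq_of_boundary hℓ₂ hℓ₂' hκ.ne' (ht₀.trans_le ht.1) (hX t ht.1)

end Reflection

theorem boundary_trace_estimate_right_general
    (ℓ₁ ℓ₂ L₀ t₀ α β κ : ℝ)
    (hℓ₁' : ℓ₁ < 1) (hℓ₂' : ℓ₂ < 1)
    (hℓ : 0 < ℓ₁ + ℓ₂) (hL₀ : 0 < L₀) (ht₀ : t₀ = L₀ / (ℓ₁ + ℓ₂))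
    (hα : α = (1 + ℓ₁) / (1 - ℓ₂)) (hβ : β = (1 + ℓ₂) / (1 - ℓ₁))
    (hκ : κ = 2 / Real.log (α * β))
    (L : ℝ) (hL : L = max ℓ₁ ℓ₂)
    (c : ℤ → ℂ)
    (hcsum : Summable fun n : ℤ => ‖(n : ℂ) * c n‖)
    (C : ℤ → ℂ)
    (hC : ∀ n : ℤ, C n = c n *
      Complex.exp (Complex.I * n * Real.pi * κ * Real.log ((1 + ℓ₂) / (1 - ℓ₂))))
    (Φx : ℝ → ℝ → ℝ)
    (hΦx : ∀ t : ℝ, t₀ ≤ t → ∀ x : ℝ, -ℓ₁ * t ≤ x → x ≤ ℓ₂ * t →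
      (Φx x t : ℂ) = Complex.I * Real.pi * κ * ∑' n : ℤ, (n : ℂ) *
        (c n * Complex.exp (Complex.I * n * Real.pi * κ * Real.log (t + x)) /
            ((t + x : ℝ) : ℂ) +
         C n * Complex.exp (Complex.I * n * Real.pi * κ * Real.log (t - x)) /
            ((t - x : ℝ) : ℂ)))
    (Φt : ℝ → ℝ → ℝ)
    (hΦt : ∀ t : ℝ, t₀ ≤ t → ∀ x : ℝ, -ℓ₁ * t ≤ x → x ≤ ℓ₂ * t →
      (Φt x t : ℂ) = Complex.I * Real.pi * κ * ∑' n : ℤ, (n : ℂ) *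
        (c n * Complex.exp (Complex.I * n * Real.pi * κ * Real.log (t + x)) /
            ((t + x : ℝ) : ℂ) -
         C n * Complex.exp (Complex.I * n * Real.pi * κ * Real.log (t - x)) /
            ((t - x : ℝ) : ℂ)))
    (E : ℝ → ℝ)
    (hE : ∀ t : ℝ, E t = (1 / 2) * ∫ x in Set.Ioo (-ℓ₁ * t) (ℓ₂ * t),
      ((Φx x t) ^ 2 + (Φt x t) ^ 2))
    :
    ∀ M : ℕ, 0 < M →
      4 * M * (1 - L) * t₀ / (1 - ℓ₂ ^ 2) ^ 2 * E t₀ ≤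
        (∫ t in Set.Ioo t₀ ((α * β) ^ M * t₀), t * (Φx (ℓ₂ * t) t) ^ 2) ∧
      (∫ t in Set.Ioo t₀ ((α * β) ^ M * t₀), t * (Φx (ℓ₂ * t) t) ^ 2) ≤
        4 * M * (1 + L) * t₀ / (1 - ℓ₂ ^ 2) ^ 2 * E t₀ := by
  intro M _
  subst hL
  have ht₀0 : 0 < t₀ := ht₀ ▸ div_pos hL₀ hℓ
  have hαβ : 1 < α * β := hα ▸ hβ ▸ one_lt_div_mul_div hℓ₁' hℓ₂' hℓ
  have hκ0 : 0 < κ := hκ ▸ div_pos two_pos (Real.log_pos hαβ)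
  have hperiod : κ * Real.log (α * β) = 2 := by
    rw [hκ, div_mul_cancel₀ _ (Real.log_pos hαβ).ne']
  have hG := continuous_waveProfile (κ := κ) hcsum
  have hwave := wave_tsum_add_sub hcsum hC
  have hEbounds := hE t₀ ▸ half_integral_sq_add_sq_mem_Icc hℓ₁' hℓ₂' hℓ hκ0
    (hα ▸ hβ ▸ hperiod) hG (periodic_waveProfile κ c) ht₀0 fun x hx =>
      ⟨(hΦx t₀ le_rfl x hx.1 hx.2).trans (hwave _ _).1,
        (hΦt t₀ le_rfl x hx.1 hx.2).trans (hwave _ _).2⟩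
  have hboundary := integral_mul_sq_boundary_eq hℓ₂' (by linarith) hκ0 hG
    (periodic_waveProfile κ c) ht₀0 (one_le_pow₀ hαβ.le) M
    (by rw [Real.log_pow, mul_left_comm, hperiod]) fun t ht =>
      (hΦx t ht (ℓ₂ * t) (by nlinarith) le_rfl).trans (hwave _ _).1
  have hL_lt : 0 < 1 - max ℓ₁ ℓ₂ := by linarith [max_lt hℓ₁' hℓ₂']
  have hL_gt : 0 < 1 + max ℓ₁ ℓ₂ := by linarith [le_max_left ℓ₁ ℓ₂]
  have hℓ₂_sq : 0 < 1 - ℓ₂ ^ 2 := by nlinarith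
  rw [hboundary]
  refine ⟨(mul_le_mul_of_nonneg_left hEbounds.2 (by positivity)).trans_eq (by field_simp),
    (le_of_eq (by field_simp)).trans (mul_le_mul_of_nonneg_left hEbounds.1 (by positivity))⟩

/-- two-sided boundary-trace estimate at the right endpoint. -/
theorem boundary_trace_estimate_right
    (ℓ₁ ℓ₂ L₀ t₀ α β κ : ℝ)
    (hℓ₁ : 0 ≤ ℓ₁) (hℓ₁' : ℓ₁ < 1) (hℓ₂ : 0 ≤ ℓ₂) (hℓ₂' : ℓ₂ < 1)
    (hℓ : 0 < ℓ₁ + ℓ₂) (hL₀ : 0 < L₀) (ht₀ : t₀ = L₀ / (ℓ₁ + ℓ₂))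
    (hα : α = (1 + ℓ₁) / (1 - ℓ₂)) (hβ : β = (1 + ℓ₂) / (1 - ℓ₁))
    (hκ : κ = 2 / Real.log (α * β))
    (L : ℝ) (hL : L = max ℓ₁ ℓ₂)
    (c : ℤ → ℂ) (hc0 : c 0 = 0)
    (hcsum : Summable fun n : ℤ => ‖(n : ℂ) * c n‖)
    (hconj : ∀ n : ℤ, c (-n) = (starRingEnd ℂ) (c n))
    (C : ℤ → ℂ)
    (hC : ∀ n : ℤ, C n = c n *
      Complex.exp (Complex.I * n * Real.pi * κ * Real.log ((1 + ℓ₂) / (1 - ℓ₂))))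
    (Φx : ℝ → ℝ → ℝ)
    (hΦx : ∀ t : ℝ, t₀ ≤ t → ∀ x : ℝ, -ℓ₁ * t ≤ x → x ≤ ℓ₂ * t →
      (Φx x t : ℂ) = Complex.I * Real.pi * κ * ∑' n : ℤ, (n : ℂ) *
        (c n * Complex.exp (Complex.I * n * Real.pi * κ * Real.log (t + x)) /
            ((t + x : ℝ) : ℂ) +
         C n * Complex.exp (Complex.I * n * Real.pi * κ * Real.log (t - x)) /
            ((t - x : ℝ) : ℂ)))
    (Φt : ℝ → ℝ → ℝ)
    (hΦt : ∀ t : ℝ, t₀ ≤ t → ∀ x : ℝ, -ℓ₁ * t ≤ x → x ≤ ℓ₂ * t →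
      (Φt x t : ℂ) = Complex.I * Real.pi * κ * ∑' n : ℤ, (n : ℂ) *
        (c n * Complex.exp (Complex.I * n * Real.pi * κ * Real.log (t + x)) /
            ((t + x : ℝ) : ℂ) -
         C n * Complex.exp (Complex.I * n * Real.pi * κ * Real.log (t - x)) /
            ((t - x : ℝ) : ℂ)))
    (E : ℝ → ℝ)
    (hE : ∀ t : ℝ, E t = (1 / 2) * ∫ x in Set.Ioo (-ℓ₁ * t) (ℓ₂ * t),
      ((Φx x t) ^ 2 + (Φt x t) ^ 2))
    :
    ∀ M : ℕ, 0 < M →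
      4 * M * (1 - L) * t₀ / (1 - ℓ₂ ^ 2) ^ 2 * E t₀ ≤
        (∫ t in Set.Ioo t₀ ((α * β) ^ M * t₀), t * (Φx (ℓ₂ * t) t) ^ 2) ∧
      (∫ t in Set.Ioo t₀ ((α * β) ^ M * t₀), t * (Φx (ℓ₂ * t) t) ^ 2) ≤
        4 * M * (1 + L) * t₀ / (1 - ℓ₂ ^ 2) ^ 2 * E t₀ :=
  boundary_trace_estimate_right_general ℓ₁ ℓ₂ L₀ t₀ α β κ hℓ₁' hℓ₂' hℓ hL₀ ht₀ hα hβ hκ L hL c hcsum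
    C hC Φx hΦx Φt hΦt E hE
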